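/- arXiv:2310.07042 — 2 statements merged into one kernel-verified Lean document; each statement's English description precedes it below -/
import Mathlib

section
/- Let Ṽ(ρ) = −2(9ρ⁴ + 102ρ² − 335)/(5+3ρ²)², let f(ρ) = (5+3ρ²)⁻², and let g₁(ρ) = (375 + 2125ρ² + 10425ρ⁴ + 243ρ⁶ + 6144ρ⁵ log(1−ρ) − 6144ρ⁵ log(1+ρ))/(3ρ⁵(5+3ρ²)²). Then both f and g₁ solve the λ = 1 spectral ODE −(1−ρ²)u″(ρ) − (6/ρ − 8ρ)u′(ρ) + (10 − Ṽ(ρ))u(ρ) = 0 on (0,1), and their Wronskian satisfies f′(ρ)g₁(ρ) − f(ρ)g₁′(ρ) = ρ⁻⁶(1−ρ²)⁻¹ for all ρ ∈ (0,1); in particular {f, g₁} is a fundamental system of solutions of this ODE on (0,1). -/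
/-- The potential `Ṽ`. -/
noncomputable def Vt (ρ : ℝ) : ℝ :=
  -2 * (9 * ρ ^ 4 + 102 * ρ ^ 2 - 335) / (5 + 3 * ρ ^ 2) ^ 2

/-- The solution `f(ρ) = (5+3ρ²)⁻²` of the `λ = 1` spectral ODE. -/
noncomputable def fSol (ρ : ℝ) : ℝ := ((5 + 3 * ρ ^ 2) ^ 2)⁻¹

/-- The second solution `g₁` of the `λ = 1` spectral ODE. -/
noncomputable def gSol (ρ : ℝ) : ℝ :=
  (375 + 2125 * ρ ^ 2 + 10425 * ρ ^ 4 + 243 * ρ ^ 6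
      + 6144 * ρ ^ 5 * Real.log (1 - ρ) - 6144 * ρ ^ 5 * Real.log (1 + ρ)) /
    (3 * ρ ^ 5 * (5 + 3 * ρ ^ 2) ^ 2)

/-!
Reduction of order. Abel's identity for the ODE `(1-ρ²)u'' + (6/ρ - 8ρ)u' + … = 0` gives the
Wronskian `W = ρ⁻⁶(1-ρ²)⁻¹` of any fundamental system. If `f` is a solution and `q' = -W/f²`,
then `f q` is a second solution with `f'(fq) - f(fq)' = W`. For `f = (5+3ρ²)⁻²` one can take
`q = (375 + 2125ρ² + 10425ρ⁴ + 243ρ⁶)/(3ρ⁵) + 2048 (log(1-ρ) - log(1+ρ))`, and `f q = g₁`.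
-/

open Filter Topology

section ReductionOfOrder

variable {f q W : ℝ → ℝ} {x : ℝ}

theorem deriv_mul_of_hasDerivAt_neg_div_sq (hf : DifferentiableAt ℝ f x) (hfx : f x ≠ 0)
    (hq : HasDerivAt q (-W x / f x ^ 2) x) :
    deriv (f * q) x = deriv f x * q x - W x / f x := by
  rw [(hf.hasDerivAt.mul hq).deriv]
  field_simp
  ring

theorem deriv_deriv_mul_of_hasDerivAt_neg_div_sq (hf : ∀ᶠ y in 𝓝 x, DifferentiableAt ℝ f y)
    (hf' : DifferentiableAt ℝ (deriv f) x) (hfx : f x ≠ 0)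
    (hq : ∀ᶠ y in 𝓝 x, HasDerivAt q (-W y / f y ^ 2) y) (hW : DifferentiableAt ℝ W x) :
    deriv (deriv (f * q)) x = deriv (deriv f) x * q x - deriv W x / f x := by
  have hfx' : ∀ᶠ y in 𝓝 x, f y ≠ 0 := hf.self_of_nhds.continuousAt.eventually_ne hfx
  have hderiv : deriv (f * q) =ᶠ[𝓝 x] deriv f * q - W / f := by
    filter_upwards [hf, hfx', hq] with y hfy hfy' hqy
    exact deriv_mul_of_hasDerivAt_neg_div_sq hfy hfy' hqy
  rw [hderiv.deriv_eq, ((hf'.hasDerivAt.mul hq.self_of_nhds).sub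
    (hW.hasDerivAt.div hf.self_of_nhds.hasDerivAt hfx)).deriv]
  field_simp
  ring

theorem wronskian_mul_of_hasDerivAt_neg_div_sq (hf : DifferentiableAt ℝ f x) (hfx : f x ≠ 0)
    (hq : HasDerivAt q (-W x / f x ^ 2) x) :
    deriv f x * (f * q) x - f x * deriv (f * q) x = W x := by
  rw [deriv_mul_of_hasDerivAt_neg_div_sq hf hfx hq, Pi.mul_apply]
  field_simp
  ring

theorem ode_mul_of_hasDerivAt_neg_div_sq {a b c : ℝ} (hf : ∀ᶠ y in 𝓝 x, DifferentiableAt ℝ f y)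
    (hf' : DifferentiableAt ℝ (deriv f) x) (hfx : f x ≠ 0)
    (hq : ∀ᶠ y in 𝓝 x, HasDerivAt q (-W y / f y ^ 2) y) (hW : DifferentiableAt ℝ W x)
    (hode : a * deriv (deriv f) x + b * deriv f x + c * f x = 0)
    (habel : a * deriv W x + b * W x = 0) :
    a * deriv (deriv (f * q)) x + b * deriv (f * q) x + c * (f * q) x = 0 := by
  rw [deriv_deriv_mul_of_hasDerivAt_neg_div_sq hf hf' hfx hq hW,
    deriv_mul_of_hasDerivAt_neg_div_sq hf.self_of_nhds hfx hq.self_of_nhds, Pi.mul_apply]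
  field_simp
  linear_combination q x * f x * hode - habel

end ReductionOfOrder

theorem hasDerivAt_five_add_three_mul_sq (ρ : ℝ) :
    HasDerivAt (fun x : ℝ => 5 + 3 * x ^ 2) (6 * ρ) ρ :=
  (((hasDerivAt_pow 2 ρ).const_mul 3).const_add 5).congr_deriv (by norm_num; ring)

theorem fSol_ne_zero (ρ : ℝ) : fSol ρ ≠ 0 := by
  unfold fSol
  positivity

theorem hasDerivAt_fSol (ρ : ℝ) : HasDerivAt fSol (-12 * ρ / (5 + 3 * ρ ^ 2) ^ 3) ρ := by
  refine (((hasDerivAt_five_add_three_mul_sq ρ).pow 2).inv (by dsimp; positivity)).congr_deriv ?_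
  simp only [Pi.pow_apply]
  field_simp
  ring

theorem hasDerivAt_deriv_fSol (ρ : ℝ) :
    HasDerivAt (deriv fSol) ((180 * ρ ^ 2 - 60) / (5 + 3 * ρ ^ 2) ^ 4) ρ := by
  rw [show deriv fSol = _ from funext fun x => (hasDerivAt_fSol x).deriv]
  refine (((hasDerivAt_id ρ).const_mul (-12)).div ((hasDerivAt_five_add_three_mul_sq ρ).pow 3)
    (by dsimp; positivity)).congr_deriv ?_
  simp only [Pi.pow_apply, id]
  field_simp
  ring

theorem spectral_ode_fSol {ρ : ℝ} (hρ : ρ ≠ 0) :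
    -(1 - ρ ^ 2) * deriv (deriv fSol) ρ - (6 / ρ - 8 * ρ) * deriv fSol ρ
      + (10 - Vt ρ) * fSol ρ = 0 := by
  rw [(hasDerivAt_deriv_fSol ρ).deriv, (hasDerivAt_fSol ρ).deriv, Vt, fSol]
  field_simp
  ring

noncomputable def gRatio (ρ : ℝ) : ℝ :=
  (375 + 2125 * ρ ^ 2 + 10425 * ρ ^ 4 + 243 * ρ ^ 6) / (3 * ρ ^ 5)
    + 2048 * (Real.log (1 - ρ) - Real.log (1 + ρ))

theorem gSol_eq_fSol_mul_gRatio : gSol = fSol * gRatio := by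
  funext ρ
  rcases eq_or_ne ρ 0 with rfl | hρ
  · simp [gSol, gRatio]
  · simp only [gSol, fSol, gRatio, Pi.mul_apply]
    field_simp
    ring

noncomputable def wronskianSol (ρ : ℝ) : ℝ := (ρ ^ 6)⁻¹ * (1 - ρ ^ 2)⁻¹

theorem hasDerivAt_gRatio {ρ : ℝ} (h0 : ρ ≠ 0) (hm : 1 - ρ ≠ 0) (hp : 1 + ρ ≠ 0) :
    HasDerivAt gRatio (-wronskianSol ρ / fSol ρ ^ 2) ρ := by
  have hnum : HasDerivAt (fun x : ℝ => 375 + 2125 * x ^ 2 + 10425 * x ^ 4 + 243 * x ^ 6)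
      (4250 * ρ + 41700 * ρ ^ 3 + 1458 * ρ ^ 5) ρ := by
    refine ((((hasDerivAt_pow 2 ρ).const_mul 2125).const_add 375).add
      ((hasDerivAt_pow 4 ρ).const_mul 10425)).add ((hasDerivAt_pow 6 ρ).const_mul 243)
      |>.congr_deriv ?_
    norm_num
    ring
  have hden : HasDerivAt (fun x : ℝ => 3 * x ^ 5) (15 * ρ ^ 4) ρ :=
    ((hasDerivAt_pow 5 ρ).const_mul 3).congr_deriv (by norm_num; ring)
  have hlogm : HasDerivAt (fun x : ℝ => Real.log (1 - x)) (-1 / (1 - ρ)) ρ :=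
    ((hasDerivAt_id ρ).const_sub 1).log hm
  have hlogp : HasDerivAt (fun x : ℝ => Real.log (1 + x)) (1 / (1 + ρ)) ρ :=
    ((hasDerivAt_id ρ).const_add 1).log hp
  refine ((hnum.div hden (by positivity)).add ((hlogm.sub hlogp).const_mul 2048)).congr_deriv ?_
  simp only [wronskianSol, fSol]
  have h1 : 1 - ρ ^ 2 ≠ 0 := by
    rw [show 1 - ρ ^ 2 = (1 - ρ) * (1 + ρ) by ring]
    exact mul_ne_zero hm hp
  field_simp
  ring

theorem hasDerivAt_wronskianSol {ρ : ℝ} (h0 : ρ ≠ 0) (h1 : 1 - ρ ^ 2 ≠ 0) :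
    HasDerivAt wronskianSol ((2 * ρ ^ 2 - 6 * (1 - ρ ^ 2)) / (ρ ^ 7 * (1 - ρ ^ 2) ^ 2)) ρ := by
  have hsq : HasDerivAt (fun x : ℝ => 1 - x ^ 2) (-(2 * ρ)) ρ := by
    simpa using (hasDerivAt_pow 2 ρ).const_sub 1
  refine (((hasDerivAt_pow 6 ρ).inv (by positivity)).mul (hsq.inv h1)).congr_deriv ?_
  simp only [Pi.inv_apply]
  field_simp
  ring

theorem abel_wronskianSol {ρ : ℝ} (h0 : ρ ≠ 0) (h1 : 1 - ρ ^ 2 ≠ 0) :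
    -(1 - ρ ^ 2) * deriv wronskianSol ρ + -(6 / ρ - 8 * ρ) * wronskianSol ρ = 0 := by
  rw [(hasDerivAt_wronskianSol h0 h1).deriv, wronskianSol]
  field_simp
  ring

/-- Both `f` and `g₁` solve the `λ = 1` spectral ODE on `(0,1)` and their
Wronskian is `f′g₁ − f g₁′ = ρ⁻⁶(1−ρ²)⁻¹`; in particular, they form a
fundamental system. -/
theorem stmt_10 :
    (∀ ρ ∈ Set.Ioo (0 : ℝ) 1,
      -(1 - ρ ^ 2) * deriv (deriv fSol) ρ - (6 / ρ - 8 * ρ) * deriv fSol ρ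
        + (10 - Vt ρ) * fSol ρ = 0) ∧
    (∀ ρ ∈ Set.Ioo (0 : ℝ) 1,
      -(1 - ρ ^ 2) * deriv (deriv gSol) ρ - (6 / ρ - 8 * ρ) * deriv gSol ρ
        + (10 - Vt ρ) * gSol ρ = 0) ∧
    (∀ ρ ∈ Set.Ioo (0 : ℝ) 1,
      deriv fSol ρ * gSol ρ - fSol ρ * deriv gSol ρ
        = (ρ ^ 6)⁻¹ * (1 - ρ ^ 2)⁻¹) := by
  have hf (ρ : ℝ) : DifferentiableAt ℝ fSol ρ := (hasDerivAt_fSol ρ).differentiableAt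
  have hq (ρ : ℝ) (hρ : ρ ∈ Set.Ioo (0 : ℝ) 1) :
      ∀ᶠ y in 𝓝 ρ, HasDerivAt gRatio (-wronskianSol y / fSol y ^ 2) y :=
    eventually_of_mem (isOpen_Ioo.mem_nhds hρ) fun y hy =>
      hasDerivAt_gRatio hy.1.ne' (by linarith [hy.2]) (by linarith [hy.1])
  refine ⟨fun ρ hρ => spectral_ode_fSol hρ.1.ne', fun ρ hρ => ?_, fun ρ hρ => ?_⟩
  · have h1 : 1 - ρ ^ 2 ≠ 0 := by nlinarith [hρ.1, hρ.2]
    rw [gSol_eq_fSol_mul_gRatio]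
    linear_combination ode_mul_of_hasDerivAt_neg_div_sq (a := -(1 - ρ ^ 2))
      (b := -(6 / ρ - 8 * ρ)) (c := 10 - Vt ρ) (Eventually.of_forall hf)
      (hasDerivAt_deriv_fSol ρ).differentiableAt (fSol_ne_zero ρ) (hq ρ hρ)
      (hasDerivAt_wronskianSol hρ.1.ne' h1).differentiableAt
      (by linear_combination spectral_ode_fSol hρ.1.ne') (abel_wronskianSol hρ.1.ne' h1)
  · rw [gSol_eq_fSol_mul_gRatio]
    exact wronskian_mul_of_hasDerivAt_neg_div_sq (hf ρ) (fSol_ne_zero ρ) (hq ρ hρ).self_of_nhds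
end

section
/- Let Ṽ(ρ) = −2(9ρ⁴ + 102ρ² − 335)/(5+3ρ²)², and define f₁(ρ) = (5+3ρ²)⁻² and f₂(ρ) = ρf₁′(ρ) + 2f₁(ρ). Then the pair (f₁, f₂) satisfies the eigenvalue system with λ = 1 on (0,1): ρf₁′(ρ) + 2f₁(ρ) − f₂(ρ) = 0 and −f₁″(ρ) − (6/ρ)f₁′(ρ) + ρf₂′(ρ) + 5f₂(ρ) − Ṽ(ρ)f₁(ρ) = 0 for all ρ ∈ (0,1). -/
/-- The first component `f₁(ρ) = (5+3ρ²)⁻²` of the `λ = 1` eigenfunction. -/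
noncomputable def f1 (ρ : ℝ) : ℝ := ((5 + 3 * ρ ^ 2) ^ 2)⁻¹

/-- The second component `f₂ = ρf₁′ + 2f₁` of the `λ = 1` eigenfunction. -/
noncomputable def f2 (ρ : ℝ) : ℝ := ρ * deriv f1 ρ + 2 * f1 ρ

/-! All functions involved are rational in `ρ` with denominators powers of `5 + 3ρ²`, so the
system reduces to a polynomial identity once the derivatives are computed in closed form
by the quotient rule. -/

theorem HasDerivAt.div_quadratic_pow {g : ℝ → ℝ} {g' a b x : ℝ} (n : ℕ)
    (hg : HasDerivAt g g' x) (hx : a + b * x ^ 2 ≠ 0) :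
    HasDerivAt (fun y => g y / (a + b * y ^ 2) ^ n)
      ((g' * (a + b * x ^ 2) - 2 * n * b * x * g x) / (a + b * x ^ 2) ^ (n + 1)) x := by
  have hq : HasDerivAt (fun y => a + b * y ^ 2) (b * (2 * x)) x := by
    simpa using ((hasDerivAt_pow 2 x).const_mul b).const_add a
  convert! hg.fun_div (hq.fun_pow n) (pow_ne_zero n hx) using 1
  rcases n with _ | n
  · simp [hx]
  · rw [Nat.add_sub_cancel]
    field_simp
    push_cast
    ring

lemma five_add_three_mul_sq_pos (ρ : ℝ) : 0 < 5 + 3 * ρ ^ 2 := by positivity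

lemma f1_eq : f1 = fun ρ => 1 / (5 + 3 * ρ ^ 2) ^ 2 := by
  funext ρ
  rw [f1, one_div]

lemma deriv_f1 : deriv f1 = fun ρ => -(12 * ρ) / (5 + 3 * ρ ^ 2) ^ 3 := by
  funext ρ
  rw [f1_eq, ((hasDerivAt_const ρ 1).div_quadratic_pow 2 (five_add_three_mul_sq_pos ρ).ne').deriv]
  ring

lemma f2_eq : f2 = fun ρ => (10 - 6 * ρ ^ 2) / (5 + 3 * ρ ^ 2) ^ 3 := by
  funext ρ
  have := (five_add_three_mul_sq_pos ρ).ne'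
  rw [f2, deriv_f1, f1]
  field_simp
  ring

lemma deriv_deriv_f1 (ρ : ℝ) :
    deriv (deriv f1) ρ = (180 * ρ ^ 2 - 60) / (5 + 3 * ρ ^ 2) ^ 4 := by
  have hnum : HasDerivAt (fun x : ℝ => -(12 * x)) (-12) ρ := by
    simpa using ((hasDerivAt_id ρ).const_mul (12 : ℝ)).fun_neg
  rw [deriv_f1, (hnum.div_quadratic_pow 3 (five_add_three_mul_sq_pos ρ).ne').deriv]
  have := (five_add_three_mul_sq_pos ρ).ne'
  field_simp
  ring

lemma deriv_f2 (ρ : ℝ) : deriv f2 ρ = (72 * ρ ^ 3 - 240 * ρ) / (5 + 3 * ρ ^ 2) ^ 4 := by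
  have hnum : HasDerivAt (fun x : ℝ => 10 - 6 * x ^ 2) (-(12 * ρ)) ρ := by
    convert! ((hasDerivAt_pow 2 ρ).const_mul 6).const_sub 10 using 1
    ring
  rw [f2_eq, (hnum.div_quadratic_pow 3 (five_add_three_mul_sq_pos ρ).ne').deriv]
  have := (five_add_three_mul_sq_pos ρ).ne'
  field_simp
  ring

/-- The pair `(f₁, f₂)` solves the radial eigenvalue system with `λ = 1` on
`(0,1)`. -/
theorem stmt_11 :
    (∀ ρ ∈ Set.Ioo (0 : ℝ) 1, ρ * deriv f1 ρ + 2 * f1 ρ - f2 ρ = 0) ∧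
    (∀ ρ ∈ Set.Ioo (0 : ℝ) 1,
      -deriv (deriv f1) ρ - 6 / ρ * deriv f1 ρ + ρ * deriv f2 ρ
        + 5 * f2 ρ - Vt ρ * f1 ρ = 0) := by
  refine ⟨fun ρ _ => sub_self (f2 ρ), fun ρ hρ => ?_⟩
  have := (five_add_three_mul_sq_pos ρ).ne'
  have := hρ.1.ne'
  rw [deriv_deriv_f1, deriv_f2, deriv_f1, f2_eq, Vt, f1]
  field_simp
  ring
end
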